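/- arXiv:1812.06214 — 2 statements merged into one kernel-verified Lean document; each statement's English description precedes it below -/
import Mathlib

section
/- A mass-action system G_k is dynamically equivalent to some complex-balanced mass-action system if and only if it is dynamically equivalent to a complex-balanced mass-action system G'_{k'} whose vertex set is contained in the set of source vertices of G. -/
/-!
Monomials with distinct real exponents are linearly independent on the positive orthant, so two
mass-action systems are dynamically equivalent exactly when they have the same net reaction
vector `∑_{y'} k_{y → y'} (y' - y)` at every vertex `y`. At a complex-balanced steady state `x₀`
of `G'_{k'}` the fluxes `k'_{y → y'} x₀^y` are complex balanced, and their net reaction vector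
vanishes at every vertex that is not a source of `G`. Such a vertex `v` can be bypassed: the flux
entering `v` along `u → v` is sent directly along the edges `u → w`, split in proportion to the
fluxes `v → w`. As the out-neighbours of `v`, weighted by these fluxes, average to `v`, this keeps
both complex balance and the net reaction vector at every other vertex. Bypassing these vertices
one at a time and dividing the fluxes by `x₀^y` again yields the required system.
-/

open Finset

noncomputable section
open scoped Classical

abbrev Vtx (n : ℕ) := Fin n → ℝ

/-- A reaction network: a finite set of directed edges between points of ℝⁿ. -/
abbrev Net (n : ℕ) := Finset (Vtx n × Vtx n)

variable {n : ℕ}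

/-- The vertices of a network. -/
def verts (G : Net n) : Finset (Vtx n) := G.image Prod.fst ∪ G.image Prod.snd

/-- The source vertices of a network. -/
def sources (G : Net n) : Finset (Vtx n) := G.image Prod.fst

/-- No self-loops. -/
def NoLoops (G : Net n) : Prop := ∀ e ∈ G, e.1 ≠ e.2

/-- `J` is a flux vector on `G`: positive on edges, zero on non-edges. -/
def IsFlux (G : Net n) (J : Vtx n × Vtx n → ℝ) : Prop :=
  (∀ e ∈ G, 0 < J e) ∧ ∀ e, e ∉ G → J e = 0

/-- Total outgoing flux at a vertex. -/
def outSum (G : Net n) (J : Vtx n × Vtx n → ℝ) (v : Vtx n) : ℝ :=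
  ∑ e ∈ G.filter (fun e => e.1 = v), J e

/-- Total incoming flux at a vertex. -/
def inSum (G : Net n) (J : Vtx n × Vtx n → ℝ) (v : Vtx n) : ℝ :=
  ∑ e ∈ G.filter (fun e => e.2 = v), J e

/-- Potential at a vertex: incoming minus outgoing flux (0 off the graph). -/
def potential (G : Net n) (J : Vtx n × Vtx n → ℝ) (v : Vtx n) : ℝ :=
  inSum G J v - outSum G J v

/-- Complex-balanced flux: in-flux equals out-flux at every vertex. -/
def ComplexBalanced (G : Net n) (J : Vtx n × Vtx n → ℝ) : Prop :=
  ∀ v ∈ verts G, inSum G J v = outSum G J v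

/-- Detailed-balanced flux: every edge is reversible and paired fluxes agree. -/
def DetailedBalanced (G : Net n) (J : Vtx n × Vtx n → ℝ) : Prop :=
  ∀ e ∈ G, (e.2, e.1) ∈ G ∧ J e = J (e.2, e.1)

/-- Steady state flux: flux-weighted reaction vectors sum to zero. -/
def SteadyFlux (G : Net n) (J : Vtx n × Vtx n → ℝ) : Prop :=
  ∑ e ∈ G, J e • (e.2 - e.1) = 0

/-- Flux-weighted sum of outgoing reaction vectors at a vertex. -/
def netOut (G : Net n) (J : Vtx n × Vtx n → ℝ) (v : Vtx n) : Vtx n :=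
  ∑ e ∈ G.filter (fun e => e.1 = v), J e • (e.2 - e.1)

/-- Flux equivalence of two flux systems. -/
def FluxEquiv (G : Net n) (J : Vtx n × Vtx n → ℝ)
    (G' : Net n) (J' : Vtx n × Vtx n → ℝ) : Prop :=
  ∀ v ∈ verts G ∪ verts G', netOut G J v = netOut G' J' v

/-- Reachability along directed edges. -/
def Reachable (G : Net n) : Vtx n → Vtx n → Prop :=
  Relation.ReflTransGen (fun a b => (a, b) ∈ G)

/-- Weak reversibility: every edge lies on a directed cycle. -/
def WeaklyReversible (G : Net n) : Prop := ∀ e ∈ G, Reachable G e.2 e.1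

/-- Reversibility: every edge has its reverse in the network. -/
def Reversible (G : Net n) : Prop := ∀ e ∈ G, (e.2, e.1) ∈ G

/-- Positive state. -/
def Pos (x : Vtx n) : Prop := ∀ i, 0 < x i

/-- Monomial `x^y = ∏ xᵢ^{yᵢ}` (real exponents). -/
def mono (x y : Vtx n) : ℝ := ∏ i, x i ^ y i

/-- `k` is a vector of rate constants on `G`: positive on edges, zero off. -/
def IsMAS (G : Net n) (k : Vtx n × Vtx n → ℝ) : Prop :=
  (∀ e ∈ G, 0 < k e) ∧ ∀ e, e ∉ G → k e = 0

/-- The mass-action vector field of `G_k`. -/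
def maf (G : Net n) (k : Vtx n × Vtx n → ℝ) (x : Vtx n) : Vtx n :=
  ∑ e ∈ G, (k e * mono x e.1) • (e.2 - e.1)

/-- Dynamical equivalence of mass-action systems. -/
def DynEquiv (G : Net n) (k : Vtx n × Vtx n → ℝ)
    (G' : Net n) (k' : Vtx n × Vtx n → ℝ) : Prop :=
  ∀ x : Vtx n, Pos x → maf G k x = maf G' k' x

/-- `x` is a complex-balanced steady state of `G_k`. -/
def CBsteady (G : Net n) (k : Vtx n × Vtx n → ℝ) (x : Vtx n) : Prop :=
  ∀ v ∈ verts G,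
    (∑ e ∈ G.filter (fun e => e.1 = v), k e * mono x v)
      = ∑ e ∈ G.filter (fun e => e.2 = v), k e * mono x e.1

/-- The stoichiometric subspace of a network. -/
def stoichSubspace (G : Net n) : Submodule ℝ (Vtx n) :=
  Submodule.span ℝ {d | ∃ e ∈ G, d = e.2 - e.1}

/-- Undirected connectivity relation of a network. -/
def connRel (G : Net n) : Vtx n → Vtx n → Prop :=
  Relation.ReflTransGen (fun a b => (a, b) ∈ G ∨ (b, a) ∈ G)

/-- The number of connected components of a network. -/
def numComponents (G : Net n) : ℕ :=
  ((verts G).image (fun v => (verts G).filter (fun w => connRel G v w))).card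

/-- The deficiency of a network. -/
def deficiency (G : Net n) : ℤ :=
  (verts G).card - numComponents G - Module.finrank ℝ (stoichSubspace G)

lemma mono_pos {x : Vtx n} (hx : Pos x) (y : Vtx n) : 0 < mono x y :=
  prod_pos fun i _ => Real.rpow_pos_of_pos (hx i) _

-- Linear independence of monomials is Artin's theorem on characters of the positive orthant.
def monoHom (y : Vtx n) : (Fin n → {r : ℝ // 0 < r}) →* ℝ where
  toFun x := mono (fun i => x i) y
  map_one' := by simp [mono]
  map_mul' a b := by
    simp only [mono, Pi.mul_apply, Positive.val_mul, ← prod_mul_distrib]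
    exact prod_congr rfl fun i _ => Real.mul_rpow (a i).2.le (b i).2.le

lemma monoHom_injective : Function.Injective (monoHom (n := n)) := by
  intro y z h
  funext i
  let x : Fin n → {r : ℝ // 0 < r} := fun j => if j = i then ⟨Real.exp 1, Real.exp_pos 1⟩ else 1
  have hmono : ∀ y : Vtx n, monoHom y x = Real.exp (y i) := fun y => by
    rw [← Real.exp_one_rpow]
    exact (Fintype.prod_eq_single i fun j hj => by simp [x, hj]).trans (by simp [x])
  simpa [hmono] using DFunLike.congr_fun h x

lemma eq_zero_of_sum_mono_smul_eq_zero {ι : Type*} (V : Finset (Vtx n)) (c : Vtx n → ι → ℝ)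
    (h : ∀ x, Pos x → ∑ v ∈ V, mono x v • c v = 0) : ∀ v ∈ V, c v = 0 := by
  have hli := (linearIndependent_monoidHom (Fin n → {r : ℝ // 0 < r}) ℝ).comp _
    monoHom_injective
  intro v hv
  funext i
  refine linearIndependent_iff'.1 hli V (fun v => c v i) (funext fun x => ?_) v hv
  simpa [monoHom, mul_comm] using congrFun (h _ fun j => (x j).2) i

lemma netOut_eq_zero_of_notMem_sources {G : Net n} (J : Vtx n × Vtx n → ℝ) {v : Vtx n}
    (hv : v ∉ sources G) : netOut G J v = 0 := by
  refine sum_eq_zero fun e he => absurd ?_ hv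
  rw [mem_filter] at he
  exact he.2 ▸ mem_image_of_mem _ he.1

lemma maf_eq_sum_netOut {G : Net n} {V : Finset (Vtx n)} (hV : sources G ⊆ V)
    (k : Vtx n × Vtx n → ℝ) (x : Vtx n) :
    maf G k x = ∑ v ∈ V, mono x v • netOut G k v := by
  rw [maf, ← sum_fiberwise_of_maps_to fun e he => hV (mem_image_of_mem Prod.fst he)]
  refine sum_congr rfl fun v _ => ?_
  rw [netOut, smul_sum]
  refine sum_congr rfl fun e he => ?_
  rw [(mem_filter.1 he).2, smul_smul, mul_comm]

lemma dynEquiv_iff_netOut_eq {G G' : Net n} {k k' : Vtx n × Vtx n → ℝ} :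
    DynEquiv G k G' k' ↔ ∀ v, netOut G k v = netOut G' k' v := by
  set V := sources G ∪ sources G'
  have hmaf : ∀ x, maf G k x - maf G' k' x = ∑ v ∈ V, mono x v • (netOut G k v - netOut G' k' v) := by
    intro x
    rw [maf_eq_sum_netOut (V := V) subset_union_left, maf_eq_sum_netOut (V := V) subset_union_right]
    simp only [smul_sub, sum_sub_distrib]
  constructor
  · intro h v
    by_cases hv : v ∈ V
    · exact sub_eq_zero.1 (eq_zero_of_sum_mono_smul_eq_zero V _
        (fun x hx => by rw [← hmaf, h x hx, sub_self]) v hv)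
    · rw [mem_union, not_or] at hv
      rw [netOut_eq_zero_of_notMem_sources k hv.1, netOut_eq_zero_of_notMem_sources k' hv.2]
  · intro h x _
    rw [← sub_eq_zero, hmaf]
    exact sum_eq_zero fun v _ => by rw [h, sub_self, smul_zero]

def fluxAt (k : Vtx n × Vtx n → ℝ) (x : Vtx n) : Vtx n × Vtx n → ℝ := fun e => k e * mono x e.1

lemma isFlux_fluxAt {G : Net n} {k : Vtx n × Vtx n → ℝ} (hk : IsMAS G k) {x : Vtx n}
    (hx : Pos x) : IsFlux G (fluxAt k x) :=
  ⟨fun e he => mul_pos (hk.1 e he) (mono_pos hx _), fun e he => by simp [fluxAt, hk.2 e he]⟩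

lemma isMAS_div_mono {G : Net n} {J : Vtx n × Vtx n → ℝ} (hJ : IsFlux G J) {x : Vtx n}
    (hx : Pos x) : IsMAS G fun e => J e / mono x e.1 :=
  ⟨fun e he => div_pos (hJ.1 e he) (mono_pos hx _), fun e he => by simp [hJ.2 e he]⟩

lemma fluxAt_div_mono (J : Vtx n × Vtx n → ℝ) {x : Vtx n} (hx : Pos x) :
    fluxAt (fun e => J e / mono x e.1) x = J :=
  funext fun _ => div_mul_cancel₀ _ (mono_pos hx _).ne'

lemma netOut_fluxAt (G : Net n) (k : Vtx n × Vtx n → ℝ) (x v : Vtx n) :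
    netOut G (fluxAt k x) v = mono x v • netOut G k v := by
  rw [netOut, netOut, smul_sum]
  refine sum_congr rfl fun e he => ?_
  rw [fluxAt, (mem_filter.1 he).2, smul_smul, mul_comm]

lemma cbsteady_iff_complexBalanced (G : Net n) (k : Vtx n × Vtx n → ℝ) (x : Vtx n) :
    CBsteady G k x ↔ ComplexBalanced G (fluxAt k x) := by
  have hout : ∀ v, outSum G (fluxAt k x) v = ∑ e ∈ G.filter (fun e => e.1 = v), k e * mono x v :=
    fun v => sum_congr rfl fun e he => by rw [fluxAt, (mem_filter.1 he).2]
  simp only [CBsteady, ComplexBalanced, hout, inSum, fluxAt, eq_comm]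

lemma IsFlux.nonneg {G : Net n} {J : Vtx n × Vtx n → ℝ} (hF : IsFlux G J) (e : Vtx n × Vtx n) :
    0 ≤ J e := by
  by_cases he : e ∈ G
  · exact (hF.1 e he).le
  · exact (hF.2 e he).ge

lemma mem_verts_fst {G : Net n} {e : Vtx n × Vtx n} (he : e ∈ G) : e.1 ∈ verts G :=
  mem_union_left _ (mem_image_of_mem _ he)

lemma mem_verts_snd {G : Net n} {e : Vtx n × Vtx n} (he : e ∈ G) : e.2 ∈ verts G :=
  mem_union_right _ (mem_image_of_mem _ he)

section SumsOverVertices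

variable {M : Type*} [AddCommMonoid M] {G : Net n} {W : Finset (Vtx n)} {f : Vtx n × Vtx n → M}

lemma sum_filter_fst_eq_sum (hW : verts G ⊆ W) (hf : ∀ e ∉ G, f e = 0) (z : Vtx n) :
    ∑ e ∈ G.filter (fun e => e.1 = z), f e = ∑ w ∈ W, f (z, w) := by
  rw [show ∑ w ∈ W, f (z, w) = ∑ e ∈ {z} ×ˢ W, f e by rw [sum_product, sum_singleton]]
  refine sum_subset (fun e he => ?_) fun e he he' => hf e fun heG => he' (mem_filter.2 ⟨heG, ?_⟩)
  · rw [mem_filter] at he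
    exact mem_product.2 ⟨mem_singleton.2 he.2, hW (mem_verts_snd he.1)⟩
  · exact mem_singleton.1 (mem_product.1 he).1

lemma sum_filter_snd_eq_sum (hW : verts G ⊆ W) (hf : ∀ e ∉ G, f e = 0) (z : Vtx n) :
    ∑ e ∈ G.filter (fun e => e.2 = z), f e = ∑ u ∈ W, f (u, z) := by
  rw [show ∑ u ∈ W, f (u, z) = ∑ e ∈ W ×ˢ {z}, f e by rw [sum_product_right, sum_singleton]]
  refine sum_subset (fun e he => ?_) fun e he he' => hf e fun heG => he' (mem_filter.2 ⟨heG, ?_⟩)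
  · rw [mem_filter] at he
    exact mem_product.2 ⟨hW (mem_verts_fst he.1), mem_singleton.2 he.2⟩
  · exact mem_singleton.1 (mem_product.1 he).2

end SumsOverVertices

namespace IsFlux

variable {G : Net n} {J : Vtx n × Vtx n → ℝ} {W : Finset (Vtx n)}

lemma outSum_eq_sum (hF : IsFlux G J) (hW : verts G ⊆ W) (z : Vtx n) :
    outSum G J z = ∑ w ∈ W, J (z, w) :=
  sum_filter_fst_eq_sum hW hF.2 z

lemma inSum_eq_sum (hF : IsFlux G J) (hW : verts G ⊆ W) (z : Vtx n) :
    inSum G J z = ∑ u ∈ W, J (u, z) :=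
  sum_filter_snd_eq_sum hW hF.2 z

lemma netOut_eq_sum (hF : IsFlux G J) (hW : verts G ⊆ W) (z : Vtx n) :
    netOut G J z = ∑ w ∈ W, J (z, w) • (w - z) :=
  sum_filter_fst_eq_sum hW (fun e he => by rw [hF.2 e he, zero_smul]) z

lemma apply_le_sum_out (hF : IsFlux G J) {v w : Vtx n} (hw : w ≠ v) :
    J (v, w) ≤ ∑ w' ∈ (verts G).erase v, J (v, w') := by
  by_cases h : (v, w) ∈ G
  · exact single_le_sum (f := fun w' => J (v, w')) (fun _ _ => hF.nonneg _)
      (mem_erase.2 ⟨hw, mem_verts_snd h⟩)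
  · rw [hF.2 _ h]
    exact sum_nonneg fun _ _ => hF.nonneg _

lemma apply_le_sum_in (hF : IsFlux G J) {u v : Vtx n} (hu : u ≠ v) :
    J (u, v) ≤ ∑ u' ∈ (verts G).erase v, J (u', v) := by
  by_cases h : (u, v) ∈ G
  · exact single_le_sum (f := fun u' => J (u', v)) (fun _ _ => hF.nonneg _)
      (mem_erase.2 ⟨hu, mem_verts_fst h⟩)
  · rw [hF.2 _ h]
    exact sum_nonneg fun _ _ => hF.nonneg _

end IsFlux

lemma isFlux_filter_pos {J : Vtx n × Vtx n → ℝ} (W : Finset (Vtx n)) (hJ : ∀ e, 0 ≤ J e)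
    (hJW : ∀ e ∉ W ×ˢ W, J e = 0) : IsFlux ((W ×ˢ W).filter fun e => 0 < J e) J := by
  refine ⟨fun e he => (mem_filter.1 he).2, fun e he => ?_⟩
  by_cases heW : e ∈ W ×ˢ W
  · exact le_antisymm (not_lt.1 fun h => he (mem_filter.2 ⟨heW, h⟩)) (hJ e)
  · exact hJW e heW

lemma verts_filter_product_subset (W : Finset (Vtx n)) (p : Vtx n × Vtx n → Prop) :
    verts ((W ×ˢ W).filter p) ⊆ W := by
  intro v hv
  rcases mem_union.1 hv with h | h <;> obtain ⟨e, he, rfl⟩ := mem_image.1 h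
  exacts [(mem_product.1 (mem_filter.1 he).1).1, (mem_product.1 (mem_filter.1 he).1).2]

section Reroute

variable {G : Net n} {J : Vtx n × Vtx n → ℝ} {v : Vtx n}

def throughFlux (G : Net n) (J : Vtx n × Vtx n → ℝ) (v : Vtx n) : ℝ :=
  ∑ w ∈ (verts G).erase v, J (v, w)

/-- Bypass the vertex `v`: the flux `J (u, v)` entering `v` is split among the edges `v → w`
in proportion to `J (v, w)`, and that share is added to the edge `u → w`. -/
def rerouteFlux (G : Net n) (J : Vtx n × Vtx n → ℝ) (v : Vtx n) : Vtx n × Vtx n → ℝ :=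
  fun e => if e.1 = v ∨ e.2 = v then 0 else J e + J (e.1, v) * J (v, e.2) / throughFlux G J v

def rerouteNet (G : Net n) (J : Vtx n × Vtx n → ℝ) (v : Vtx n) : Net n :=
  (((verts G).erase v) ×ˢ ((verts G).erase v)).filter fun e => 0 < rerouteFlux G J v e

lemma rerouteFlux_apply {u w : Vtx n} (hu : u ≠ v) (hw : w ≠ v) :
    rerouteFlux G J v (u, w) = J (u, w) + J (u, v) * J (v, w) / throughFlux G J v :=
  if_neg (by simp [hu, hw])

lemma rerouteFlux_nonneg (hF : IsFlux G J) (e : Vtx n × Vtx n) : 0 ≤ rerouteFlux G J v e := by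
  unfold rerouteFlux
  split_ifs
  · exact le_rfl
  · exact add_nonneg (hF.nonneg e) (div_nonneg (mul_nonneg (hF.nonneg _) (hF.nonneg _))
      (sum_nonneg fun _ _ => hF.nonneg _))

lemma rerouteFlux_eq_zero_of_notMem (hF : IsFlux G J) {e : Vtx n × Vtx n}
    (he : e ∉ ((verts G).erase v) ×ˢ ((verts G).erase v)) : rerouteFlux G J v e = 0 := by
  obtain ⟨u, w⟩ := e
  by_cases hu : u = v
  · simp [rerouteFlux, hu]
  by_cases hw : w = v
  · simp [rerouteFlux, hw]
  rw [rerouteFlux_apply hu hw]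
  simp only [mem_product, mem_erase, ne_eq, hu, hw, not_false_eq_true, true_and,
    not_and_or] at he
  rcases he with hu' | hw'
  · rw [hF.2 _ fun h => hu' (mem_verts_fst h), hF.2 (u, v) fun h => hu' (mem_verts_fst h)]
    simp
  · rw [hF.2 _ fun h => hw' (mem_verts_snd h), hF.2 (v, w) fun h => hw' (mem_verts_snd h)]
    simp

lemma isFlux_rerouteNet (hF : IsFlux G J) : IsFlux (rerouteNet G J v) (rerouteFlux G J v) :=
  isFlux_filter_pos _ (rerouteFlux_nonneg hF) fun _ he => rerouteFlux_eq_zero_of_notMem hF he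

lemma verts_rerouteNet_subset : verts (rerouteNet G J v) ⊆ (verts G).erase v :=
  verts_filter_product_subset _ _

lemma sum_in_erase_eq_throughFlux (hF : IsFlux G J) (hCB : ComplexBalanced G J)
    (hv : v ∈ verts G) : ∑ u ∈ (verts G).erase v, J (u, v) = throughFlux G J v := by
  have h := hCB v hv
  rw [hF.inSum_eq_sum subset_rfl, hF.outSum_eq_sum subset_rfl, ← add_sum_erase _ _ hv,
    ← add_sum_erase _ _ hv] at h
  exact add_left_cancel h

lemma div_throughFlux_mul_out (hF : IsFlux G J) {w : Vtx n} (hw : w ≠ v) :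
    J (v, w) / throughFlux G J v * throughFlux G J v = J (v, w) :=
  div_mul_cancel_of_imp fun h => le_antisymm (h ▸ hF.apply_le_sum_out hw) (hF.nonneg _)

lemma div_throughFlux_mul_in (hF : IsFlux G J) (hCB : ComplexBalanced G J) (hv : v ∈ verts G)
    {u : Vtx n} (hu : u ≠ v) : J (u, v) / throughFlux G J v * throughFlux G J v = J (u, v) :=
  div_mul_cancel_of_imp fun h => le_antisymm
    (h ▸ sum_in_erase_eq_throughFlux hF hCB hv ▸ hF.apply_le_sum_in hu) (hF.nonneg _)

lemma sum_rerouteFlux_smul {M : Type*} [AddCommGroup M] [Module ℝ M] (hF : IsFlux G J)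
    (hCB : ComplexBalanced G J) (hv : v ∈ verts G) {z : Vtx n} (hz : z ≠ v) {g : Vtx n → M}
    (hg : ∑ w ∈ (verts G).erase v, J (v, w) • g w = throughFlux G J v • g v) :
    ∑ w ∈ (verts G).erase v, rerouteFlux G J v (z, w) • g w = ∑ w ∈ verts G, J (z, w) • g w := by
  calc ∑ w ∈ (verts G).erase v, rerouteFlux G J v (z, w) • g w
      = ∑ w ∈ (verts G).erase v, J (z, w) • g w
          + (J (z, v) / throughFlux G J v) • ∑ w ∈ (verts G).erase v, J (v, w) • g w := by
        rw [smul_sum, ← sum_add_distrib]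
        refine sum_congr rfl fun w hw => ?_
        rw [rerouteFlux_apply hz (ne_of_mem_erase hw), smul_smul, ← add_smul]
        congr 1
        ring
    _ = J (z, v) • g v + ∑ w ∈ (verts G).erase v, J (z, w) • g w := by
        rw [hg, smul_smul, div_throughFlux_mul_in hF hCB hv hz, add_comm]
    _ = ∑ w ∈ verts G, J (z, w) • g w := add_sum_erase _ (fun w => J (z, w) • g w) hv

lemma outSum_rerouteNet (hF : IsFlux G J) (hCB : ComplexBalanced G J) (hv : v ∈ verts G)
    {z : Vtx n} (hz : z ≠ v) :
    outSum (rerouteNet G J v) (rerouteFlux G J v) z = outSum G J z := by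
  rw [(isFlux_rerouteNet hF).outSum_eq_sum verts_rerouteNet_subset, hF.outSum_eq_sum subset_rfl]
  simpa using sum_rerouteFlux_smul hF hCB hv hz (g := fun _ => (1 : ℝ)) (by simp [throughFlux])

lemma inSum_rerouteNet (hF : IsFlux G J) (hCB : ComplexBalanced G J) (hv : v ∈ verts G)
    {z : Vtx n} (hz : z ≠ v) :
    inSum (rerouteNet G J v) (rerouteFlux G J v) z = inSum G J z := by
  rw [(isFlux_rerouteNet hF).inSum_eq_sum verts_rerouteNet_subset, hF.inSum_eq_sum subset_rfl,
    ← add_sum_erase _ _ hv]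
  calc ∑ u ∈ (verts G).erase v, rerouteFlux G J v (u, z)
      = ∑ u ∈ (verts G).erase v, J (u, z)
          + J (v, z) / throughFlux G J v * ∑ u ∈ (verts G).erase v, J (u, v) := by
        rw [mul_sum, ← sum_add_distrib]
        refine sum_congr rfl fun u hu => ?_
        rw [rerouteFlux_apply (ne_of_mem_erase hu) hz]
        ring
    _ = J (v, z) + ∑ u ∈ (verts G).erase v, J (u, z) := by
        rw [sum_in_erase_eq_throughFlux hF hCB hv, div_throughFlux_mul_out hF hz, add_comm]

lemma netOut_rerouteNet (hF : IsFlux G J) (hCB : ComplexBalanced G J) (hv : v ∈ verts G)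
    (hnet : netOut G J v = 0) (z : Vtx n) :
    netOut (rerouteNet G J v) (rerouteFlux G J v) z = netOut G J z := by
  by_cases hz : z = v
  · subst hz
    rw [hnet]
    exact netOut_eq_zero_of_notMem_sources _ fun h =>
      (mem_erase.1 (verts_rerouteNet_subset (mem_union_left _ h))).1 rfl
  rw [(isFlux_rerouteNet hF).netOut_eq_sum verts_rerouteNet_subset, hF.netOut_eq_sum subset_rfl]
  refine sum_rerouteFlux_smul hF hCB hv hz ?_
  rw [hF.netOut_eq_sum subset_rfl, ← add_sum_erase _ _ hv, sub_self, smul_zero, zero_add] at hnet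
  calc ∑ w ∈ (verts G).erase v, J (v, w) • (w - z)
      = ∑ w ∈ (verts G).erase v, (J (v, w) • (w - v) + J (v, w) • (v - z)) :=
        sum_congr rfl fun w _ => by rw [← smul_add, sub_add_sub_cancel]
    _ = throughFlux G J v • (v - z) := by
        rw [sum_add_distrib, hnet, zero_add, ← sum_smul, throughFlux]

lemma complexBalanced_rerouteNet (hF : IsFlux G J) (hCB : ComplexBalanced G J)
    (hv : v ∈ verts G) : ComplexBalanced (rerouteNet G J v) (rerouteFlux G J v) := by
  intro z hz
  obtain ⟨hzv, hzG⟩ := mem_erase.1 (verts_rerouteNet_subset hz)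
  rw [inSum_rerouteNet hF hCB hv hzv, outSum_rerouteNet hF hCB hv hzv]
  exact hCB z hzG

end Reroute

theorem exists_complexBalanced_verts_subset {G : Net n} {J : Vtx n × Vtx n → ℝ}
    (S : Finset (Vtx n)) (hF : IsFlux G J) (hCB : ComplexBalanced G J)
    (hS : ∀ v ∉ S, netOut G J v = 0) :
    ∃ (G' : Net n) (J' : Vtx n × Vtx n → ℝ), IsFlux G' J' ∧ ComplexBalanced G' J' ∧
      verts G' ⊆ S ∧ ∀ z, netOut G' J' z = netOut G J z := by
  suffices ∀ (D : Finset (Vtx n)) (G : Net n) (J : Vtx n × Vtx n → ℝ), verts G \ S ⊆ D →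
      IsFlux G J → ComplexBalanced G J → (∀ v ∉ S, netOut G J v = 0) →
      ∃ (G' : Net n) (J' : Vtx n × Vtx n → ℝ), IsFlux G' J' ∧ ComplexBalanced G' J' ∧
        verts G' ⊆ S ∧ ∀ z, netOut G' J' z = netOut G J z from
    this _ G J subset_rfl hF hCB hS
  intro D
  induction D using Finset.induction_on with
  | empty =>
    intro G J hD hF hCB _
    exact ⟨G, J, hF, hCB, sdiff_eq_empty_iff_subset.1 (subset_empty.1 hD), fun _ => rfl⟩
  | insert v D _ ih =>
    intro G J hD hF hCB hS
    by_cases hv : v ∈ verts G \ S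
    · obtain ⟨hvG, hvS⟩ := mem_sdiff.1 hv
      have hnet := netOut_rerouteNet hF hCB hvG (hS v hvS)
      have hD' : verts (rerouteNet G J v) \ S ⊆ D := fun w hw => by
        obtain ⟨hwv, hwG⟩ := mem_erase.1 (verts_rerouteNet_subset (mem_sdiff.1 hw).1)
        exact (mem_insert.1 (hD (mem_sdiff.2 ⟨hwG, (mem_sdiff.1 hw).2⟩))).resolve_left hwv
      obtain ⟨G', J', hF', hCB', hsub, hnet'⟩ := ih _ _ hD' (isFlux_rerouteNet hF)
        (complexBalanced_rerouteNet hF hCB hvG) fun w hw => (hnet w).trans (hS w hw)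
      exact ⟨G', J', hF', hCB', hsub, fun z => (hnet' z).trans (hnet z)⟩
    · exact ih G J (fun w hw => (mem_insert.1 (hD hw)).resolve_left fun h => hv (h ▸ hw))
        hF hCB hS

theorem stmt13_general (G : Net n) (k : Vtx n × Vtx n → ℝ) :
    (∃ (G' : Net n) (k' : Vtx n × Vtx n → ℝ),
      IsMAS G' k' ∧ DynEquiv G k G' k' ∧ ∃ x0, Pos x0 ∧ CBsteady G' k' x0) ↔
    (∃ (G' : Net n) (k' : Vtx n × Vtx n → ℝ),
      IsMAS G' k' ∧ DynEquiv G k G' k' ∧ (∃ x0, Pos x0 ∧ CBsteady G' k' x0) ∧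
        verts G' ⊆ sources G) := by
  refine ⟨fun ⟨G', k', hk', hDE, x0, hx0, hCB⟩ => ?_,
    fun ⟨G', k', hk', hDE, hCB, _⟩ => ⟨G', k', hk', hDE, hCB⟩⟩
  rw [dynEquiv_iff_netOut_eq] at hDE
  rw [cbsteady_iff_complexBalanced] at hCB
  have hS : ∀ v ∉ sources G, netOut G' (fluxAt k' x0) v = 0 := fun v hv => by
    rw [netOut_fluxAt, ← hDE, netOut_eq_zero_of_notMem_sources k hv, smul_zero]
  obtain ⟨G₂, J₂, hF₂, hCB₂, hsub, hnet⟩ :=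
    exists_complexBalanced_verts_subset _ (isFlux_fluxAt hk' hx0) hCB hS
  refine ⟨G₂, fun e => J₂ e / mono x0 e.1, isMAS_div_mono hF₂ hx0, ?_, ⟨x0, hx0, ?_⟩, hsub⟩
  · refine dynEquiv_iff_netOut_eq.2 fun v => (hDE v).trans ?_
    refine smul_right_injective _ (mono_pos hx0 v).ne' ?_
    simp only [← netOut_fluxAt, fluxAt_div_mono _ hx0, hnet]
  · rwa [cbsteady_iff_complexBalanced, fluxAt_div_mono _ hx0]

theorem stmt13 (G : Net n) (k : Vtx n × Vtx n → ℝ) (hk : IsMAS G k) :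
    (∃ (G' : Net n) (k' : Vtx n × Vtx n → ℝ),
      IsMAS G' k' ∧ DynEquiv G k G' k' ∧ ∃ x0, Pos x0 ∧ CBsteady G' k' x0) ↔
    (∃ (G' : Net n) (k' : Vtx n × Vtx n → ℝ),
      IsMAS G' k' ∧ DynEquiv G k G' k' ∧ (∃ x0, Pos x0 ∧ CBsteady G' k' x0) ∧
        verts G' ⊆ sources G) :=
  stmt13_general G k
end
end

section
/- A mass-action system G_k is dynamically equivalent to some weakly reversible mass-action system if and only if it is dynamically equivalent to a weakly reversible mass-action system G'_{k'} whose vertex set is contained in the set of source vertices of G. -/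
open Finset

noncomputable section
open scoped Classical

variable {n : ℕ}

/-- dot product -/
def dotv (z v : Vtx n) : ℝ := ∑ i, z i * v i

lemma dotv_sub (z v w : Vtx n) : dotv z v - dotv z w = dotv z (v - w) := by
  simp [dotv, ← Finset.sum_sub_distrib, mul_sub]

lemma dotv_self_pos {v : Vtx n} (hv : v ≠ 0) : 0 < dotv v v := by
  have h : ∃ i, v i ≠ 0 := by
    by_contra h
    push_neg at h
    exact hv (funext h)
  obtain ⟨i, hi⟩ := h
  exact Finset.sum_pos' (fun j _ => mul_self_nonneg (v j))
    ⟨i, Finset.mem_univ i, mul_self_pos.mpr hi⟩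

lemma dotv_add_smul (z d v : Vtx n) (ε : ℝ) :
    dotv (z + ε • d) v = dotv z v + ε * dotv d v := by
  simp [dotv, add_mul, Finset.sum_add_distrib, Finset.mul_sum, mul_assoc]

lemma exists_sep (P : Finset (Vtx n × Vtx n)) (hP : ∀ p ∈ P, p.1 ≠ p.2) :
    ∃ z : Vtx n, ∀ p ∈ P, dotv z p.1 ≠ dotv z p.2 := by
  classical
  induction P using Finset.induction_on with
  | empty => exact ⟨0, by simp⟩
  | @insert p P hpP ih =>
    obtain ⟨z, hz⟩ := ih (fun q hq => hP q (Finset.mem_insert_of_mem hq))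
    have hp : p.1 ≠ p.2 := hP p (Finset.mem_insert_self p P)
    set d : Vtx n := p.1 - p.2 with hd
    have hd0 : d ≠ 0 := sub_ne_zero_of_ne hp
    have hdd : 0 < dotv d d := dotv_self_pos hd0
    set bad : Finset ℝ :=
      (insert p P).image (fun q => -(dotv z q.1 - dotv z q.2) / (dotv d q.1 - dotv d q.2))
      with hbad
    obtain ⟨ε, hε⟩ := Infinite.exists_notMem_finset bad
    refine ⟨z + ε • d, fun q hq => ?_⟩
    have key : dotv (z + ε • d) q.1 - dotv (z + ε • d) q.2
        = (dotv z q.1 - dotv z q.2) + ε * (dotv d q.1 - dotv d q.2) := by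
      rw [dotv_add_smul, dotv_add_smul]; ring
    intro hcontra
    have h0 : (dotv z q.1 - dotv z q.2) + ε * (dotv d q.1 - dotv d q.2) = 0 := by
      rw [← key, hcontra, sub_self]
    by_cases hden : dotv d q.1 - dotv d q.2 = 0
    · rw [hden, mul_zero, add_zero] at h0
      rcases Finset.mem_insert.mp hq with rfl | hqP
      · rw [dotv_sub, ← hd] at hden
        exact absurd hden hdd.ne'
      · exact hz q hqP (sub_eq_zero.mp h0)
    · have : ε = -(dotv z q.1 - dotv z q.2) / (dotv d q.1 - dotv d q.2) := by
        field_simp at h0 ⊢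
        linarith
      exact hε (this ▸ Finset.mem_image_of_mem _ hq)

lemma vdm_kill {m : ℕ} (r : Fin m → ℝ) (hr : Function.Injective r)
    (c : Fin m → ℝ) (h : ∀ N : ℕ, ∑ j, c j * r j ^ N = 0) : ∀ j, c j = 0 := by
  have hdet : (Matrix.vandermonde r).det ≠ 0 := Matrix.det_vandermonde_ne_zero_iff.mpr hr
  have hunit : IsUnit (Matrix.vandermonde r) := by
    rwa [Matrix.isUnit_iff_isUnit_det, isUnit_iff_ne_zero]
  have hinj := Matrix.vecMul_injective_iff_isUnit.mpr hunit
  have h0 : Matrix.vecMul c (Matrix.vandermonde r) = Matrix.vecMul 0 (Matrix.vandermonde r) := by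
    funext N
    simpa [Matrix.vecMul, dotProduct, Matrix.vandermonde] using h N
  have := hinj h0
  intro j
  exact congrFun this j

lemma exp_rpow' (a b : ℝ) : (Real.exp a) ^ b = Real.exp (a * b) := by
  rw [Real.rpow_def_of_pos (Real.exp_pos a), Real.log_exp]

lemma mono_exp (z v : Vtx n) (N : ℝ) :
    mono (fun i => Real.exp (N * z i)) v = Real.exp (N * dotv z v) := by
  rw [mono]
  have : ∀ i, Real.exp (N * z i) ^ v i = Real.exp (N * (z i * v i)) := by
    intro i; rw [exp_rpow', mul_assoc]
  simp only [this]
  rw [← Real.exp_sum, dotv, Finset.mul_sum]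

lemma mono_indep (S : Finset (Vtx n)) (c : Vtx n → Vtx n)
    (h : ∀ x : Vtx n, Pos x → ∑ v ∈ S, mono x v • c v = 0) :
    ∀ v ∈ S, c v = 0 := by
  classical
  obtain ⟨z, hz⟩ := exists_sep S.offDiag (fun p hp => (Finset.mem_offDiag.mp hp).2.2)
  have hα : ∀ v ∈ S, ∀ w ∈ S, v ≠ w → dotv z v ≠ dotv z w := fun v hv w hw hvw =>
    hz (v, w) (Finset.mem_offDiag.mpr ⟨hv, hw, hvw⟩)
  intro v hv
  funext i
  show c v i = 0
  set m := S.card with hm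
  set e : Fin m ≃ {x // x ∈ S} := S.equivFin.symm with he
  set r : Fin m → ℝ := fun j => Real.exp (dotv z (e j : Vtx n)) with hr
  have hrinj : Function.Injective r := by
    intro a b hab
    by_contra hne
    have h1 : (e a : Vtx n) ≠ (e b : Vtx n) := by
      intro hcoe
      exact hne (e.injective (Subtype.ext hcoe))
    exact hα _ (e a).2 _ (e b).2 h1 (Real.exp_injective hab)
  have hvan : ∀ N : ℕ, ∑ j, (fun j => c (e j : Vtx n) i) j * r j ^ N = 0 := by
    intro N
    set x : Vtx n := fun i => Real.exp ((N : ℝ) * z i) with hx'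
    have hx : Pos x := fun i => Real.exp_pos _
    have h2 : ∑ v ∈ S, (mono x v • c v) i = 0 := by
      simpa using congrFun (h x hx) i
    have hsum : ∑ v ∈ S, (mono x v • c v) i
        = ∑ j, (fun j => c (e j : Vtx n) i) j * r j ^ N := by
      rw [← Finset.sum_coe_sort S (fun v => (mono x v • c v) i),
        ← Equiv.sum_comp e (fun w : {x // x ∈ S} => (mono x (w : Vtx n) • c (w : Vtx n)) i)]
      refine Finset.sum_congr rfl fun j _ => ?_
      have hmr : mono x (e j : Vtx n) = r j ^ N := by
        rw [hx', mono_exp, hr, ← Real.exp_nat_mul]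
      simp [hmr, mul_comm]
    rw [← hsum, h2]
  have := vdm_kill r hrinj _ hvan (e.symm ⟨v, hv⟩)
  simpa using this

lemma netOut_eq_zero_of_not_source {G : Net n} {k : Vtx n × Vtx n → ℝ} {v : Vtx n}
    (hv : v ∉ sources G) : netOut G k v = 0 := by
  rw [netOut, Finset.sum_eq_zero]
  intro e he
  rw [Finset.mem_filter] at he
  exact absurd (he.2 ▸ Finset.mem_image_of_mem Prod.fst he.1) hv

lemma maf_eq_sum_sources (G : Net n) (k : Vtx n × Vtx n → ℝ) (x : Vtx n) :
    maf G k x = ∑ v ∈ sources G, mono x v • netOut G k v := by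
  rw [maf]
  rw [← Finset.sum_fiberwise_of_maps_to (g := Prod.fst) (t := sources G)
    (fun e he => Finset.mem_image_of_mem Prod.fst he)]
  refine Finset.sum_congr rfl fun v _ => ?_
  rw [netOut, Finset.smul_sum]
  refine Finset.sum_congr rfl fun e he => ?_
  rw [Finset.mem_filter] at he
  rw [smul_smul, he.2, mul_comm]

lemma maf_eq_sum_over (G : Net n) (k : Vtx n × Vtx n → ℝ) (x : Vtx n)
    (S : Finset (Vtx n)) (hS : sources G ⊆ S) :
    maf G k x = ∑ v ∈ S, mono x v • netOut G k v := by
  rw [maf_eq_sum_sources]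
  refine Finset.sum_subset hS fun v _ hv => ?_
  rw [netOut_eq_zero_of_not_source hv, smul_zero]

lemma dynEquiv_iff_netOut (G : Net n) (k : Vtx n × Vtx n → ℝ)
    (G' : Net n) (k' : Vtx n × Vtx n → ℝ) :
    DynEquiv G k G' k' ↔ ∀ v, netOut G k v = netOut G' k' v := by
  constructor
  · intro h v
    set S := sources G ∪ sources G' with hS
    by_cases hv : v ∈ S
    · have key : ∀ w ∈ S, netOut G k w - netOut G' k' w = 0 := by
        refine mono_indep S _ fun x hx => ?_
        have h1 := maf_eq_sum_over G k x S Finset.subset_union_left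
        have h2 := maf_eq_sum_over G' k' x S Finset.subset_union_right
        calc ∑ w ∈ S, mono x w • (netOut G k w - netOut G' k' w)
            = ∑ w ∈ S, mono x w • netOut G k w - ∑ w ∈ S, mono x w • netOut G' k' w := by
              rw [← Finset.sum_sub_distrib]
              exact Finset.sum_congr rfl fun w _ => smul_sub _ _ _
          _ = maf G k x - maf G' k' x := by rw [h1, h2]
          _ = 0 := by rw [h x hx, sub_self]
      exact sub_eq_zero.mp (key v hv)
    · rw [Finset.mem_union, not_or] at hv
      rw [netOut_eq_zero_of_not_source hv.1, netOut_eq_zero_of_not_source hv.2]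
  · intro h x hx
    rw [maf_eq_sum_over G k x (sources G ∪ sources G') Finset.subset_union_left,
      maf_eq_sum_over G' k' x (sources G ∪ sources G') Finset.subset_union_right]
    exact Finset.sum_congr rfl fun v _ => by rw [h v]

lemma netOut_eq_sum_over {G : Net n} {k : Vtx n × Vtx n → ℝ}
    (hk : ∀ e, e ∉ G → k e = 0) (v : Vtx n) (W : Finset (Vtx n))
    (hW : ∀ w, (v, w) ∈ G → w ∈ W) :
    netOut G k v = ∑ w ∈ W, k (v, w) • (w - v) := by
  classical
  rw [netOut]
  rw [← Finset.sum_filter_add_sum_filter_not W (fun w => (v, w) ∈ G)]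
  have h2 : ∑ w ∈ W.filter (fun w => (v, w) ∉ G), k (v, w) • (w - v) = 0 := by
    refine Finset.sum_eq_zero fun w hw => ?_
    rw [Finset.mem_filter] at hw
    rw [hk _ hw.2, zero_smul]
  rw [h2, add_zero]
  refine Finset.sum_bij' (fun e _ => e.2) (fun w _ => (v, w)) ?_ ?_ ?_ ?_ ?_
  · intro e he
    rw [Finset.mem_filter] at he ⊢
    obtain ⟨he1, he2⟩ := he
    have : e = (v, e.2) := by rw [← he2]
    exact ⟨hW e.2 (this ▸ he1), this ▸ he1⟩
  · intro w hw
    rw [Finset.mem_filter] at hw ⊢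
    exact ⟨hw.2, rfl⟩
  · intro e he
    rw [Finset.mem_filter] at he
    exact Prod.ext_iff.mpr ⟨he.2.symm, rfl⟩
  · intro w _; rfl
  · intro e he
    obtain ⟨e1, e2⟩ := e
    rw [Finset.mem_filter] at he
    have h1 : e1 = v := he.2
    subst h1
    rfl

lemma contract (G2 : Net n) (k2 : Vtx n × Vtx n → ℝ) (hk2 : IsMAS G2 k2)
    (hwr : WeaklyReversible G2) (y : Vtx n) (hy0 : netOut G2 k2 y = 0) :
    ∃ (G3 : Net n) (k3 : Vtx n × Vtx n → ℝ), IsMAS G3 k3 ∧ WeaklyReversible G3 ∧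
      (∀ v, netOut G3 k3 v = netOut G2 k2 v) ∧ verts G3 ⊆ verts G2 ∧ y ∉ verts G3 := by
  classical
  set W : Finset (Vtx n) := insert y (G2.image Prod.snd) with hW
  set K : ℝ := ∑ w ∈ W.erase y, k2 (y, w) with hK
  set k3 : Vtx n × Vtx n → ℝ :=
    fun e => if e.1 = y ∨ e.2 = y then 0 else k2 e + k2 (e.1, y) * k2 (y, e.2) / K with hk3
  set C : Net n := (G2.image Prod.fst) ×ˢ (G2.image Prod.snd) with hC
  set G3 : Net n := C.filter (fun e => k3 e ≠ 0) with hG3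
  have hk2nn : ∀ e, 0 ≤ k2 e := by
    intro e
    by_cases he : e ∈ G2
    · exact (hk2.1 e he).le
    · rw [hk2.2 e he]
  have hKnn : 0 ≤ K := Finset.sum_nonneg fun w _ => hk2nn _
  have hk3nn : ∀ e, 0 ≤ k3 e := by
    intro e
    simp only [hk3]
    split
    · exact le_refl 0
    · exact add_nonneg (hk2nn e) (div_nonneg (mul_nonneg (hk2nn _) (hk2nn _)) hKnn)
  have hT : ∀ {a b : Vtx n}, (a, b) ∈ G2 → b ∈ W := fun h =>
    Finset.mem_insert_of_mem (Finset.mem_image_of_mem Prod.snd h)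
  have hS : ∀ {a b : Vtx n}, (a, b) ∈ G2 → a ∈ G2.image Prod.fst := fun h =>
    Finset.mem_image_of_mem Prod.fst h
  have hmemC : ∀ e, k3 e ≠ 0 →
      (e.1 ≠ y ∧ e.2 ≠ y) ∧ (e ∈ G2 ∨ ((e.1, y) ∈ G2 ∧ (y, e.2) ∈ G2)) := by
    intro e he
    rw [hk3] at he
    dsimp only at he
    by_cases hcond : e.1 = y ∨ e.2 = y
    · rw [if_pos hcond] at he; exact absurd rfl he
    · rw [if_neg hcond] at he
      push_neg at hcond
      refine ⟨hcond, ?_⟩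
      by_cases h1 : k2 e = 0
      · right
        rw [h1, zero_add] at he
        have hnum : k2 (e.1, y) * k2 (y, e.2) ≠ 0 := fun h => he (by rw [h, zero_div])
        rw [mul_ne_zero_iff] at hnum
        constructor
        · by_contra h; exact hnum.1 (hk2.2 _ h)
        · by_contra h; exact hnum.2 (hk2.2 _ h)
      · left
        by_contra h
        exact h1 (hk2.2 _ h)
  have hmemC' : ∀ e ∈ G3, e ∈ C := fun e he => (Finset.mem_filter.mp he).1
  have hG3C : ∀ e, k3 e ≠ 0 → e ∈ C := by
    intro e he
    obtain ⟨-, h2⟩ := hmemC e he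
    rw [hC, Finset.mem_product]
    rcases h2 with h | ⟨h1, h2⟩
    · exact ⟨hS h, Finset.mem_image_of_mem Prod.snd h⟩
    · exact ⟨hS h1, Finset.mem_image.mpr ⟨(y, e.2), h2, rfl⟩⟩
  have hmas3 : IsMAS G3 k3 := by
    constructor
    · intro e he
      exact lt_of_le_of_ne (hk3nn e) (Ne.symm (Finset.mem_filter.mp he).2)
    · intro e he
      by_contra h
      exact he (Finset.mem_filter.mpr ⟨hG3C e h, h⟩)
  -- flux at y
  have hyW : y ∈ W := Finset.mem_insert_self _ _
  have hyout : ∑ w ∈ W.erase y, k2 (y, w) • (w - y) = 0 := by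
    have h1 : netOut G2 k2 y = ∑ w ∈ W, k2 (y, w) • (w - y) :=
      netOut_eq_sum_over hk2.2 y W fun w h => hT h
    have h2 : k2 (y, y) • (y - y) + ∑ w ∈ W.erase y, k2 (y, w) • (w - y)
        = ∑ w ∈ W, k2 (y, w) • (w - y) :=
      Finset.add_sum_erase W (fun w => k2 (y, w) • (w - y)) hyW
    rw [sub_self, smul_zero, zero_add] at h2
    rw [h2, ← h1, hy0]
  have hK0 : K = 0 → ∀ v, v ≠ y → k2 (v, y) = 0 := by
    intro hK0' v hv
    by_contra h
    have hvy : (v, y) ∈ G2 := by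
      by_contra h2; exact h (hk2.2 _ h2)
    have hsum0 : ∑ w ∈ W.erase y, k2 (y, w) = 0 := by rw [← hK]; exact hK0'
    have hall : ∀ w ∈ W.erase y, k2 (y, w) = 0 :=
      (Finset.sum_eq_zero_iff_of_nonneg fun w _ => hk2nn _).mp hsum0
    have hnoout : ∀ w, (y, w) ∈ G2 → w = y := by
      intro w hw
      by_contra hne
      have hpos := hk2.1 _ hw
      rw [hall w (Finset.mem_erase.mpr ⟨hne, hT hw⟩)] at hpos
      exact lt_irrefl 0 hpos
    have hreach : ∀ b, Reachable G2 y b → b = y := by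
      intro b hb
      induction hb with
      | refl => rfl
      | tail h1 h2 ih => exact hnoout _ (ih ▸ h2)
    exact hv (hreach v (hwr (v, y) hvy))
  have hk3vy : ∀ v w : Vtx n, v ≠ y → w ≠ y →
      k3 (v, w) = k2 (v, w) + k2 (v, y) * k2 (y, w) / K := by
    intro v w hv hw
    simp only [hk3]
    rw [if_neg (by push_neg; exact ⟨hv, hw⟩)]
  have hk3y : ∀ e : Vtx n × Vtx n, e.1 = y ∨ e.2 = y → k3 e = 0 := by
    intro e he
    simp only [hk3]
    rw [if_pos he]
  -- netOut preservation
  have hnet : ∀ v, netOut G3 k3 v = netOut G2 k2 v := by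
    intro v
    by_cases hv : v = y
    · subst hv
      rw [hy0, netOut_eq_sum_over hmas3.2 v W]
      · refine Finset.sum_eq_zero fun w _ => ?_
        rw [hk3y (v, w) (Or.inl rfl), zero_smul]
      · intro w hw
        have := hmemC' _ hw
        rw [hC, Finset.mem_product] at this
        exact Finset.mem_insert_of_mem this.2
    · rw [netOut_eq_sum_over hmas3.2 v W
        (fun w hw => by
          have := hmemC' _ hw
          rw [hC, Finset.mem_product] at this
          exact Finset.mem_insert_of_mem this.2),
        netOut_eq_sum_over hk2.2 v W (fun w hw => hT hw)]
      have hsplit3 : k3 (v, y) • (y - v) + ∑ w ∈ W.erase y, k3 (v, w) • (w - v)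
          = ∑ w ∈ W, k3 (v, w) • (w - v) :=
        Finset.add_sum_erase W (fun w => k3 (v, w) • (w - v)) hyW
      have hsplit2 : k2 (v, y) • (y - v) + ∑ w ∈ W.erase y, k2 (v, w) • (w - v)
          = ∑ w ∈ W, k2 (v, w) • (w - v) :=
        Finset.add_sum_erase W (fun w => k2 (v, w) • (w - v)) hyW
      rw [← hsplit3, ← hsplit2, hk3y (v, y) (Or.inr rfl), zero_smul, zero_add]
      have hstep : ∀ w ∈ W.erase y, k3 (v, w) • (w - v)
          = k2 (v, w) • (w - v) + (k2 (v, y) / K) • (k2 (y, w) • (w - v)) := by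
        intro w hw
        rw [hk3vy v w hv (Finset.mem_erase.mp hw).1, add_smul, smul_smul]
        ring_nf
      rw [Finset.sum_congr rfl hstep, Finset.sum_add_distrib, ← Finset.smul_sum]
      have hmid : ∑ w ∈ W.erase y, k2 (y, w) • (w - v) = K • (y - v) := by
        have : ∀ w ∈ W.erase y, k2 (y, w) • (w - v)
            = k2 (y, w) • (w - y) + k2 (y, w) • (y - v) := by
          intro w _
          rw [← smul_add]
          congr 1
          abel
        rw [Finset.sum_congr rfl this, Finset.sum_add_distrib, hyout, zero_add,
          ← Finset.sum_smul, hK]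
      rw [hmid, smul_smul]
      have hfin : k2 (v, y) / K * K = k2 (v, y) := by
        by_cases hKz : K = 0
        · rw [hKz, mul_zero, hK0 hKz v hv]
        · exact div_mul_cancel₀ _ hKz
      rw [hfin]
      abel
  -- weak reversibility
  have hedge1 : ∀ a c : Vtx n, a ≠ y → c ≠ y → (a, c) ∈ G2 → (a, c) ∈ G3 := by
    intro a c ha hc h
    have hne : k3 (a, c) ≠ 0 := by
      rw [hk3vy a c ha hc]
      have h1 := hk2.1 _ h
      have h2 : 0 ≤ k2 (a, y) * k2 (y, c) / K :=
        div_nonneg (mul_nonneg (hk2nn _) (hk2nn _)) hKnn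
      exact (lt_of_lt_of_le h1 (le_add_of_nonneg_right h2)).ne'
    exact Finset.mem_filter.mpr ⟨hG3C _ hne, hne⟩
  have hKpos : ∀ c : Vtx n, c ≠ y → (y, c) ∈ G2 → 0 < K := by
    intro c hc h
    refine lt_of_lt_of_le (hk2.1 _ h) ?_
    rw [hK]
    exact Finset.single_le_sum (f := fun w => k2 (y, w)) (fun w _ => hk2nn _)
      (Finset.mem_erase.mpr ⟨hc, hT h⟩)
  have hedge2 : ∀ u c : Vtx n, u ≠ y → c ≠ y → (u, y) ∈ G2 → (y, c) ∈ G2 → (u, c) ∈ G3 := by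
    intro u c hu hc huy hyc
    have hne : k3 (u, c) ≠ 0 := by
      rw [hk3vy u c hu hc]
      have h2 : 0 < k2 (u, y) * k2 (y, c) / K :=
        div_pos (mul_pos (hk2.1 _ huy) (hk2.1 _ hyc)) (hKpos c hc hyc)
      exact (add_pos_of_nonneg_of_pos (hk2nn _) h2).ne'
    exact Finset.mem_filter.mpr ⟨hG3C _ hne, hne⟩
  have lift : ∀ b, b ≠ y → ∀ a, Reachable G2 a b →
      ((a ≠ y → Reachable G3 a b) ∧
       (a = y → ∀ u, u ≠ y → (u, y) ∈ G2 → Reachable G3 u b)) := by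
    intro b hb a hab
    induction hab using Relation.ReflTransGen.head_induction_on with
    | refl => exact ⟨fun _ => Relation.ReflTransGen.refl, fun hay => absurd hay hb⟩
    | @head a' c h hcb ih =>
      by_cases hcy : c = y
      · subst hcy
        refine ⟨fun ha' => (ih.2 rfl) a' ha' h, fun _ u hu huy => (ih.2 rfl) u hu huy⟩
      · constructor
        · intro ha'
          exact Relation.ReflTransGen.head (hedge1 a' c ha' hcy h) (ih.1 hcy)
        · intro ha'y u hu huy
          subst ha'y
          exact Relation.ReflTransGen.head (hedge2 u c hu hcy huy h) (ih.1 hcy)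
  have hwr3 : WeaklyReversible G3 := by
    intro e he
    have hne : k3 e ≠ 0 := (Finset.mem_filter.mp he).2
    obtain ⟨⟨h1y, h2y⟩, hcase⟩ := hmemC e hne
    have hreach2 : Reachable G2 e.2 e.1 := by
      rcases hcase with h | ⟨ha, hb⟩
      · exact hwr e h
      · exact Relation.ReflTransGen.trans (hwr (y, e.2) hb) (hwr (e.1, y) ha)
    exact (lift e.1 h1y e.2 hreach2).1 h2y
  -- vertex containment
  have hvsub : verts G3 ⊆ verts G2 := by
    intro v hv
    rw [verts, Finset.mem_union] at hv ⊢
    rcases hv with hv | hv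
    · obtain ⟨e, he, rfl⟩ := Finset.mem_image.mp hv
      have := hG3C e (Finset.mem_filter.mp he).2
      rw [hC, Finset.mem_product] at this
      exact Or.inl this.1
    · obtain ⟨e, he, rfl⟩ := Finset.mem_image.mp hv
      have := hG3C e (Finset.mem_filter.mp he).2
      rw [hC, Finset.mem_product] at this
      exact Or.inr this.2
  have hynot : y ∉ verts G3 := by
    intro hy
    rw [verts, Finset.mem_union] at hy
    rcases hy with hy | hy
    · obtain ⟨e, he, h1⟩ := Finset.mem_image.mp hy
      exact (hmemC e (Finset.mem_filter.mp he).2).1.1 h1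
    · obtain ⟨e, he, h1⟩ := Finset.mem_image.mp hy
      exact (hmemC e (Finset.mem_filter.mp he).2).1.2 h1
  exact ⟨G3, k3, hmas3, hwr3, hnet, hvsub, hynot⟩


lemma main_aux (G : Net n) (k : Vtx n × Vtx n → ℝ) :
    ∀ N : ℕ, ∀ (G2 : Net n) (k2 : Vtx n × Vtx n → ℝ),
      (verts G2 \ sources G).card ≤ N → IsMAS G2 k2 →
      DynEquiv G k G2 k2 → WeaklyReversible G2 →
      ∃ (G' : Net n) (k' : Vtx n × Vtx n → ℝ),
        IsMAS G' k' ∧ DynEquiv G k G' k' ∧ WeaklyReversible G' ∧ verts G' ⊆ sources G := by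
  intro N
  induction N with
  | zero =>
    intro G2 k2 hcard hmas hdyn hwr
    refine ⟨G2, k2, hmas, hdyn, hwr, ?_⟩
    intro v hv
    by_contra hns
    have h1 : v ∈ verts G2 \ sources G := Finset.mem_sdiff.mpr ⟨hv, hns⟩
    have h2 := Finset.card_pos.mpr ⟨v, h1⟩
    omega
  | succ N ih =>
    intro G2 k2 hcard hmas hdyn hwr
    by_cases hsub : verts G2 ⊆ sources G
    · exact ⟨G2, k2, hmas, hdyn, hwr, hsub⟩
    · obtain ⟨y, hyv, hys⟩ := Finset.not_subset.mp hsub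
      have hnetEq := (dynEquiv_iff_netOut G k G2 k2).mp hdyn
      have hy0 : netOut G2 k2 y = 0 := by
        rw [← hnetEq y]
        exact netOut_eq_zero_of_not_source hys
      obtain ⟨G3, k3, hmas3, hwr3, hnet3, hsub3, hynot3⟩ := contract G2 k2 hmas hwr y hy0
      have hdyn3 : DynEquiv G k G3 k3 := (dynEquiv_iff_netOut G k G3 k3).mpr
        (fun v => by rw [hnet3 v]; exact hnetEq v)
      refine ih G3 k3 ?_ hmas3 hdyn3 hwr3
      have hsubset : verts G3 \ sources G ⊆ (verts G2 \ sources G).erase y := by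
        intro v hv
        rw [Finset.mem_sdiff] at hv
        refine Finset.mem_erase.mpr ⟨?_, Finset.mem_sdiff.mpr ⟨hsub3 hv.1, hv.2⟩⟩
        rintro rfl
        exact hynot3 hv.1
      calc (verts G3 \ sources G).card
          ≤ ((verts G2 \ sources G).erase y).card := Finset.card_le_card hsubset
        _ = (verts G2 \ sources G).card - 1 :=
            Finset.card_erase_of_mem (Finset.mem_sdiff.mpr ⟨hyv, hys⟩)
        _ ≤ N := by
            have := Finset.card_pos.mpr ⟨y, Finset.mem_sdiff.mpr ⟨hyv, hys⟩⟩
            omega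

theorem stmt14 (G : Net n) (k : Vtx n × Vtx n → ℝ) (hk : IsMAS G k) :
    (∃ (G' : Net n) (k' : Vtx n × Vtx n → ℝ),
      IsMAS G' k' ∧ DynEquiv G k G' k' ∧ WeaklyReversible G') ↔
    (∃ (G' : Net n) (k' : Vtx n × Vtx n → ℝ),
      IsMAS G' k' ∧ DynEquiv G k G' k' ∧ WeaklyReversible G' ∧
        verts G' ⊆ sources G) := by
  constructor
  · rintro ⟨G2, k2, hmas, hdyn, hwr⟩
    exact main_aux G k _ G2 k2 le_rfl hmas hdyn hwr
  · rintro ⟨G', k', h1, h2, h3, -⟩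
    exact ⟨G', k', h1, h2, h3⟩
end
end
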